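/- arXiv:2209.01662 — 2 statements merged into one kernel-verified Lean document; each statement's English description precedes it below -/
import Mathlib

section
/- Let η : ℝ → ℝ be a differentiable convex function with η(k) = 0 and η'(k) = 0 for some k ∈ ℝ, and let f : ℝ → ℝ be differentiable with |f'(s)| ≤ M for all s. Define q(z) = ∫_k^z η'(s) f'(s) ds. Then |q(z)| ≤ M · η(z) for all z ∈ ℝ. -/
theorem stmt_5 (η f : ℝ → ℝ) (k M : ℝ)
    (hη : Differentiable ℝ η) (hconv : ConvexOn ℝ Set.univ η)
    (hηk : η k = 0) (hη'k : deriv η k = 0)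
    (hf : Differentiable ℝ f) (hM : ∀ s, |deriv f s| ≤ M) :
    ∀ z : ℝ, |∫ s in k..z, deriv η s * deriv f s| ≤ M * η z := by
  have hM0 : 0 ≤ M := le_trans (abs_nonneg _) (hM 0)
  have hmono : Monotone (deriv η) := by
    intro x y hxy
    rcases eq_or_lt_of_le hxy with rfl | hlt
    · exact le_rfl
    · exact le_trans
        (hconv.deriv_le_slope (Set.mem_univ x) (Set.mem_univ y) hlt (hη x))
        (hconv.slope_le_deriv (Set.mem_univ x) (Set.mem_univ y) hlt (hη y))
  have hη'int : ∀ a b : ℝ, IntervalIntegrable (deriv η) MeasureTheory.volume a b :=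
    fun a b => hmono.intervalIntegrable
  have hftc : ∀ a b : ℝ, (∫ s in a..b, deriv η s) = η b - η a := fun a b =>
    intervalIntegral.integral_deriv_eq_sub (fun x _ => hη x) (hη'int a b)
  have hgmeas : MeasureTheory.AEStronglyMeasurable
      (fun s => deriv η s * deriv f s) MeasureTheory.volume :=
    ((measurable_deriv η).mul (measurable_deriv f)).aestronglyMeasurable
  have hgint : ∀ a b : ℝ, IntervalIntegrable (fun s => deriv η s * deriv f s)
      MeasureTheory.volume a b := by
    intro a b
    refine ((hη'int a b).abs.const_mul M).mono_fun hgmeas.restrict ?_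
    filter_upwards with s
    have : |deriv η s * deriv f s| ≤ M * |deriv η s| := by
      rw [abs_mul]
      calc |deriv η s| * |deriv f s| ≤ |deriv η s| * M :=
            mul_le_mul_of_nonneg_left (hM s) (abs_nonneg _)
        _ = M * |deriv η s| := mul_comm _ _
    simpa [Real.norm_eq_abs, abs_of_nonneg, abs_mul, abs_of_nonneg hM0,
      abs_abs] using this
  intro z
  rcases le_total k z with hkz | hzk
  · calc |∫ s in k..z, deriv η s * deriv f s|
        ≤ ∫ s in k..z, |deriv η s * deriv f s| :=
          intervalIntegral.abs_integral_le_integral_abs hkz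
      _ ≤ ∫ s in k..z, M * deriv η s := by
          refine intervalIntegral.integral_mono_on hkz (hgint k z).abs
            ((hη'int k z).const_mul M) ?_
          intro s hs
          have hη's : 0 ≤ deriv η s := hη'k ▸ hmono hs.1
          rw [abs_mul]
          calc |deriv η s| * |deriv f s| ≤ |deriv η s| * M :=
                mul_le_mul_of_nonneg_left (hM s) (abs_nonneg _)
            _ = M * deriv η s := by rw [abs_of_nonneg hη's, mul_comm]
      _ = M * η z := by
          rw [intervalIntegral.integral_const_mul, hftc, hηk, sub_zero]
  · have hsymm : (∫ s in k..z, deriv η s * deriv f s)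
        = -(∫ s in z..k, deriv η s * deriv f s) := (intervalIntegral.integral_symm z k)
    rw [hsymm, abs_neg]
    calc |∫ s in z..k, deriv η s * deriv f s|
        ≤ ∫ s in z..k, |deriv η s * deriv f s| :=
          intervalIntegral.abs_integral_le_integral_abs hzk
      _ ≤ ∫ s in z..k, M * (-(deriv η s)) := by
          refine intervalIntegral.integral_mono_on hzk (hgint z k).abs
            (((hη'int z k).neg).const_mul M) ?_
          intro s hs
          have hη's : deriv η s ≤ 0 := hη'k ▸ hmono hs.2
          rw [abs_mul]
          calc |deriv η s| * |deriv f s| ≤ |deriv η s| * M :=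
                mul_le_mul_of_nonneg_left (hM s) (abs_nonneg _)
            _ = M * (-(deriv η s)) := by rw [abs_of_nonpos hη's, mul_comm]
      _ = M * η z := by
          have : (∫ s in z..k, -(deriv η s)) = -(η k - η z) := by
            rw [intervalIntegral.integral_neg, hftc]
          rw [intervalIntegral.integral_const_mul, this, hηk, zero_sub, neg_neg]
end

section
/- For every n ∈ ℕ and every s ∈ ℝ, |s| · |d/ds tanh(n·s)| = |s| · n · sech²(n·s) ≤ 4. -/
/-! Since `|t| ≤ cosh t` and `1 ≤ cosh t`, we get `|t| / cosh² t ≤ 1`, and with `t = n s` the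
quantity `|s| · n · sech²(n s)` is exactly `|n s| / cosh²(n s)`; the bound `4` is far from sharp. -/

open Real

theorem Real.hasDerivAt_tanh (x : ℝ) : HasDerivAt tanh (1 / cosh x ^ 2) x := by
  have hcosh : cosh x ≠ 0 := (cosh_pos x).ne'
  have h : HasDerivAt (fun y => sinh y / cosh y) _ x :=
    (hasDerivAt_sinh x).div (hasDerivAt_cosh x) hcosh
  convert h using 1
  · exact funext tanh_eq_sinh_div_cosh
  · rw [← cosh_sq_sub_sinh_sq x]
    ring

theorem Real.abs_le_cosh (x : ℝ) : |x| ≤ cosh x :=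
  calc |x| ≤ sinh |x| := self_le_sinh_iff.2 (abs_nonneg x)
    _ ≤ cosh |x| := (sinh_lt_cosh _).le
    _ = cosh x := cosh_abs x

theorem Real.abs_div_cosh_sq_le_one (x : ℝ) : |x| / cosh x ^ 2 ≤ 1 := by
  have hx : cosh x ≤ cosh x ^ 2 := by nlinarith [one_le_cosh x]
  exact div_le_one_of_le₀ ((abs_le_cosh x).trans hx) (by positivity)

theorem stmt_10 (n : ℕ) (s : ℝ) :
    |s| * |deriv (fun x : ℝ => Real.tanh ((n : ℝ) * x)) s| =
        |s| * ((n : ℝ) * (1 / Real.cosh ((n : ℝ) * s)) ^ 2) ∧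
      |s| * ((n : ℝ) * (1 / Real.cosh ((n : ℝ) * s)) ^ 2) ≤ 4 := by
  have hderiv : deriv (fun x : ℝ => tanh (n * x)) s = n * (1 / cosh (n * s)) ^ 2 := by
    have h : HasDerivAt (fun x : ℝ => tanh (n * x)) _ s :=
      (hasDerivAt_tanh (n * s)).comp s ((hasDerivAt_id s).const_mul (n : ℝ))
    rw [h.deriv]
    ring
  have hrescale : |s| * (n * (1 / cosh (n * s)) ^ 2) = |n * s| / cosh (n * s) ^ 2 := by
    rw [abs_mul, Nat.abs_cast]
    ring
  have hderiv_nonneg : (0 : ℝ) ≤ n * (1 / cosh (n * s)) ^ 2 := by positivity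
  refine ⟨by rw [hderiv, abs_of_nonneg hderiv_nonneg], ?_⟩
  rw [hrescale]
  linarith [abs_div_cosh_sq_le_one (n * s)]
end
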